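/- Let Θ = [(B + Wᵀ)/√2 ; (B − Wᵀ)/√2] (vertical block concatenation) for B ∈ ℝ^{n×k}, W ∈ ℝ^{k×n}, and let Λ_k be a symmetric n×n matrix. If ‖ΘΘᵀ − diag(2Λ_k, −2Λ_k)‖_F ≤ δ for some δ > 0, then ‖BW − Λ_k‖_F ≤ δ. -/

import Mathlib

/-!
Write `P = B * W`. The blocks of `Θ * Θᵀ - diag(2Λ, -2Λ)` are `X ± Y` on the diagonal and
`C ∓ Z` off it, with `X = (BBᵀ + WᵀW)/2`, `C = (BBᵀ - WᵀW)/2`, `Y = (P + Pᵀ)/2 - 2Λ` and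
`Z = (P - Pᵀ)/2`. By the parallelogram law its squared Frobenius norm is
`‖BBᵀ‖² + ‖WᵀW‖² + 2‖Y‖² + 2‖Z‖²`, and `‖BBᵀ‖² + ‖WᵀW‖² ≥ 2‖P‖² = ‖P + Pᵀ‖²/2 + ‖P - Pᵀ‖²/2`.
Since `P - Λ` is the average of `(P + Pᵀ)/2 + Y` and `2Z`, two applications of
`‖A + A'‖² ≤ 2‖A‖² + 2‖A'‖²` give `2‖P - Λ‖² ≤ ‖Θ * Θᵀ - diag(2Λ, -2Λ)‖²`.
-/

open Matrix

/-- Frobenius norm of a real matrix. -/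
noncomputable def frobNorm {m n : Type*} [Fintype m] [Fintype n] (A : Matrix m n ℝ) : ℝ :=
  Real.sqrt (∑ i, ∑ j, (A i j) ^ 2)

section FrobeniusNorm

variable {l m n p q : Type*} [Fintype l] [Fintype m] [Fintype n] [Fintype p] [Fintype q]

theorem frobNorm_nonneg (A : Matrix m n ℝ) : 0 ≤ frobNorm A := Real.sqrt_nonneg _

theorem frobNorm_sq (A : Matrix m n ℝ) : frobNorm A ^ 2 = ∑ i, ∑ j, A i j ^ 2 :=
  Real.sq_sqrt (by positivity)

theorem frobNorm_sq_eq_trace (A : Matrix m n ℝ) : frobNorm A ^ 2 = trace (A * Aᵀ) := by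
  rw [frobNorm_sq]
  simp [trace, mul_apply, sq]

theorem frobNorm_transpose (A : Matrix m n ℝ) : frobNorm Aᵀ = frobNorm A := by
  rw [frobNorm, frobNorm, Finset.sum_comm]
  rfl

theorem frobNorm_smul_sq (c : ℝ) (A : Matrix m n ℝ) :
    frobNorm (c • A) ^ 2 = c ^ 2 * frobNorm A ^ 2 := by
  simp [frobNorm_sq, mul_pow, Finset.mul_sum]

theorem frobNorm_fromBlocks_sq (A : Matrix m p ℝ) (B : Matrix m q ℝ) (C : Matrix n p ℝ)
    (D : Matrix n q ℝ) :
    frobNorm (fromBlocks A B C D) ^ 2 =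
      frobNorm A ^ 2 + frobNorm B ^ 2 + frobNorm C ^ 2 + frobNorm D ^ 2 := by
  simp only [frobNorm_sq, Fintype.sum_sum_type, fromBlocks_apply₁₁, fromBlocks_apply₁₂,
    fromBlocks_apply₂₁, fromBlocks_apply₂₂, Finset.sum_add_distrib]
  ring

theorem frobNorm_add_sq_add_frobNorm_sub_sq (A B : Matrix m n ℝ) :
    frobNorm (A + B) ^ 2 + frobNorm (A - B) ^ 2 = 2 * frobNorm A ^ 2 + 2 * frobNorm B ^ 2 := by
  simp only [frobNorm_sq, Matrix.add_apply, Matrix.sub_apply, ← Finset.sum_add_distrib,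
    Finset.mul_sum]
  exact Finset.sum_congr rfl fun i _ => Finset.sum_congr rfl fun j _ => by ring

theorem frobNorm_add_sq_le (A B : Matrix m n ℝ) :
    frobNorm (A + B) ^ 2 ≤ 2 * frobNorm A ^ 2 + 2 * frobNorm B ^ 2 := by
  linarith [frobNorm_add_sq_add_frobNorm_sub_sq A B, sq_nonneg (frobNorm (A - B))]

/-- `‖BBᵀ‖ = ‖BᵀB‖`, `‖WᵀW‖ = ‖WWᵀ‖` and `‖BW‖² = tr (BᵀB WWᵀ)`, so this is
`0 ≤ ‖BᵀB - WWᵀ‖²`. -/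
theorem two_mul_frobNorm_mul_sq_le (B : Matrix m l ℝ) (W : Matrix l m ℝ) :
    2 * frobNorm (B * W) ^ 2 ≤ frobNorm (B * Bᵀ) ^ 2 + frobNorm (Wᵀ * W) ^ 2 := by
  have h := sq_nonneg (frobNorm (Bᵀ * B - W * Wᵀ))
  have hB : trace (B * Bᵀ * (B * Bᵀ)ᵀ) = trace (Bᵀ * B * (Bᵀ * B)) := by
    rw [transpose_mul, transpose_transpose, ← Matrix.mul_assoc, trace_mul_comm]
    simp only [Matrix.mul_assoc]
  have hW : trace (Wᵀ * W * (Wᵀ * W)ᵀ) = trace (W * Wᵀ * (W * Wᵀ)) := by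
    rw [transpose_mul, transpose_transpose, ← Matrix.mul_assoc, trace_mul_comm]
    simp only [Matrix.mul_assoc]
  have hBW : trace (B * W * (B * W)ᵀ) = trace (Bᵀ * B * (W * Wᵀ)) := by
    rw [transpose_mul, ← Matrix.mul_assoc, trace_mul_comm]
    simp only [Matrix.mul_assoc]
  have hWB : trace (W * Wᵀ * (Bᵀ * B)) = trace (Bᵀ * B * (W * Wᵀ)) := trace_mul_comm _ _
  rw [frobNorm_sq_eq_trace, transpose_sub, transpose_mul, transpose_mul, transpose_transpose,
    transpose_transpose, Matrix.mul_sub, Matrix.sub_mul, Matrix.sub_mul, trace_sub, trace_sub,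
    trace_sub, hWB] at h
  rw [frobNorm_sq_eq_trace, frobNorm_sq_eq_trace, frobNorm_sq_eq_trace, hB, hW, hBW]
  linarith

end FrobeniusNorm

section BlockFactorization

variable {l m : Type*} [Fintype l]

theorem fromRows_mul_transpose_sub_fromBlocks (B : Matrix m l ℝ) (W : Matrix l m ℝ)
    (Λ : Matrix m m ℝ) :
    fromRows ((√2)⁻¹ • (B + Wᵀ)) ((√2)⁻¹ • (B - Wᵀ)) *
        (fromRows ((√2)⁻¹ • (B + Wᵀ)) ((√2)⁻¹ • (B - Wᵀ)))ᵀ -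
      fromBlocks ((2 : ℝ) • Λ) 0 0 ((-2 : ℝ) • Λ) =
    fromBlocks
      ((2⁻¹ : ℝ) • (B * Bᵀ + Wᵀ * W) + ((2⁻¹ : ℝ) • (B * W + (B * W)ᵀ) - (2 : ℝ) • Λ))
      ((2⁻¹ : ℝ) • (B * Bᵀ - Wᵀ * W) - (2⁻¹ : ℝ) • (B * W - (B * W)ᵀ))
      ((2⁻¹ : ℝ) • (B * Bᵀ - Wᵀ * W) + (2⁻¹ : ℝ) • (B * W - (B * W)ᵀ))
      ((2⁻¹ : ℝ) • (B * Bᵀ + Wᵀ * W) - ((2⁻¹ : ℝ) • (B * W + (B * W)ᵀ) - (2 : ℝ) • Λ)) := by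
  have h2 : (√2)⁻¹ * (√2)⁻¹ = (2⁻¹ : ℝ) := by
    rw [← mul_inv, Real.mul_self_sqrt zero_le_two]
  rw [sub_eq_iff_eq_add, fromBlocks_add, transpose_fromRows, fromRows_mul_fromCols]
  simp only [transpose_smul, Matrix.smul_mul, Matrix.mul_smul, smul_smul, h2]
  simp only [transpose_add, transpose_sub, transpose_transpose, transpose_mul, Matrix.add_mul,
    Matrix.mul_add, Matrix.sub_mul, Matrix.mul_sub]
  congr 1 <;> module

variable [Fintype m]

theorem two_mul_frobNorm_mul_sub_sq_le (B : Matrix m l ℝ) (W : Matrix l m ℝ)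
    (Λ : Matrix m m ℝ) :
    2 * frobNorm (B * W - Λ) ^ 2 ≤
      frobNorm (fromRows ((√2)⁻¹ • (B + Wᵀ)) ((√2)⁻¹ • (B - Wᵀ)) *
        (fromRows ((√2)⁻¹ • (B + Wᵀ)) ((√2)⁻¹ • (B - Wᵀ)))ᵀ -
          fromBlocks ((2 : ℝ) • Λ) 0 0 ((-2 : ℝ) • Λ)) ^ 2 := by
  rw [fromRows_mul_transpose_sub_fromBlocks, frobNorm_fromBlocks_sq]
  set P := B * W
  set X := (2⁻¹ : ℝ) • (B * Bᵀ + Wᵀ * W)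
  set C := (2⁻¹ : ℝ) • (B * Bᵀ - Wᵀ * W)
  set S := (2⁻¹ : ℝ) • (P + Pᵀ)
  set Z := (2⁻¹ : ℝ) • (P - Pᵀ)
  have hXY := frobNorm_add_sq_add_frobNorm_sub_sq X (S - (2 : ℝ) • Λ)
  have hCZ := frobNorm_add_sq_add_frobNorm_sub_sq C Z
  have hXC : 2 * frobNorm X ^ 2 + 2 * frobNorm C ^ 2 =
      frobNorm (B * Bᵀ) ^ 2 + frobNorm (Wᵀ * W) ^ 2 := by
    rw [← frobNorm_add_sq_add_frobNorm_sub_sq, show X + C = B * Bᵀ by module,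
      show X - C = Wᵀ * W by module]
  have hSZ : 2 * frobNorm S ^ 2 + 2 * frobNorm Z ^ 2 = 2 * frobNorm P ^ 2 := by
    rw [← frobNorm_add_sq_add_frobNorm_sub_sq, show S + Z = P by module,
      show S - Z = Pᵀ by module, frobNorm_transpose, two_mul]
  have hS : frobNorm (S - Λ) ^ 2 ≤ (frobNorm S ^ 2 + frobNorm (S - (2 : ℝ) • Λ) ^ 2) / 2 := by
    rw [show S - Λ = (2⁻¹ : ℝ) • (S + (S - (2 : ℝ) • Λ)) by module, frobNorm_smul_sq]
    linarith [frobNorm_add_sq_le S (S - (2 : ℝ) • Λ)]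
  have hP : frobNorm (P - Λ) ^ 2 ≤ 2 * frobNorm (S - Λ) ^ 2 + 2 * frobNorm Z ^ 2 := by
    rw [show P - Λ = (S - Λ) + Z by module]
    exact frobNorm_add_sq_le _ _
  linarith [two_mul_frobNorm_mul_sq_le B W, sq_nonneg (frobNorm Z)]

end BlockFactorization

theorem stmt_2_general {n k : ℕ} (B : Matrix (Fin n) (Fin k) ℝ) (W : Matrix (Fin k) (Fin n) ℝ)
    (Λ : Matrix (Fin n) (Fin n) ℝ) (δ : ℝ)
    (Θ : Matrix (Fin n ⊕ Fin n) (Fin k) ℝ)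
    (hΘ : Θ = Matrix.fromRows ((Real.sqrt 2)⁻¹ • (B + Wᵀ)) ((Real.sqrt 2)⁻¹ • (B - Wᵀ)))
    (h : frobNorm (Θ * Θᵀ - Matrix.fromBlocks ((2 : ℝ) • Λ) 0 0 ((-2 : ℝ) • Λ)) ≤ δ) :
    frobNorm (B * W - Λ) ≤ δ := by
  subst hΘ
  refine le_trans ?_ h
  rw [← pow_le_pow_iff_left₀ (frobNorm_nonneg _) (frobNorm_nonneg _) two_ne_zero]
  linarith [two_mul_frobNorm_mul_sub_sq_le B W Λ, sq_nonneg (frobNorm (B * W - Λ))]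

/-- If `Θ = [(B + Wᵀ)/√2 ; (B − Wᵀ)/√2]` satisfies
`‖ΘΘᵀ − diag(2Λ_k, −2Λ_k)‖_F ≤ δ` for a symmetric `Λ_k` and some `δ > 0`, then
`‖BW − Λ_k‖_F ≤ δ`. -/
theorem stmt_2 {n k : ℕ} (B : Matrix (Fin n) (Fin k) ℝ) (W : Matrix (Fin k) (Fin n) ℝ)
    (Λ : Matrix (Fin n) (Fin n) ℝ) (hΛ : Λ.IsSymm) (δ : ℝ) (hδ : 0 < δ)
    (Θ : Matrix (Fin n ⊕ Fin n) (Fin k) ℝ)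
    (hΘ : Θ = Matrix.fromRows ((Real.sqrt 2)⁻¹ • (B + Wᵀ)) ((Real.sqrt 2)⁻¹ • (B - Wᵀ)))
    (h : frobNorm (Θ * Θᵀ - Matrix.fromBlocks ((2 : ℝ) • Λ) 0 0 ((-2 : ℝ) • Λ)) ≤ δ) :
    frobNorm (B * W - Λ) ≤ δ :=
  stmt_2_general B W Λ δ Θ hΘ h
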